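/- (Equivalence of Problem (SPP) and formulation (SPP-F1).) With the subdivision setup, D(x_s,x_t) equals the optimal value of the following mixed-integer program (SPP-F1) in the variables d_i ≥ 0 (i ∈ V), z_{ij} ∈ {0,1} ((i,j) ∈ A), λ_{ije} ≥ 0 ((i,j) ∈ A, e ∈ Ext(F_{ij})): minimize Σ_{i∈V} ω_i d_i subject to: Σ_{(s,j)∈A} z_{sj} − Σ_{(h,s)∈A} z_{hs} = 1; Σ_{(i,j)∈A} z_{ij} − Σ_{(h,i)∈A} z_{hi} = 0 for all i ∈ V∖{s,t}; Σ_{(t,j)∈A} z_{tj} − Σ_{(h,t)∈A} z_{ht} = −1; Σ_{(h,i)∈A} z_{hi} ≤ 1 and Σ_{(i,j)∈A} z_{ij} ≤ 1 for all i ∈ V; d_s ≥ ‖Σ_{(s,j)∈A} Σ_{e∈Ext(F_{sj})} λ_{sje} e − x_s‖_{p_s}; d_i ≥ ‖Σ_{(i,j)∈A} Σ_{e∈Ext(F_{ij})} λ_{ije} e − Σ_{(h,i)∈A} Σ_{e∈Ext(F_{hi})} λ_{hie} e‖_{p_i} for all i ∈ V∖{s,t}; d_t ≥ ‖x_t − Σ_{(h,t)∈A}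 Σ_{e∈Ext(F_{ht})} λ_{hte} e‖_{p_t}; and Σ_{e∈Ext(F_{ij})} λ_{ije} = z_{ij} for all (i,j) ∈ A. -/
import Mathlib


open scoped BigOperators ENNReal

attribute [local instance] Classical.propDecidable

/-- The ℓ_p norm on ℝ^d for an extended-real exponent `p` (with `‖x‖_∞ = max_k |x_k|`). -/
noncomputable def lpnorm {d : ℕ} (p : ℝ≥0∞) (x : Fin d → ℝ) : ℝ :=
  if p = ∞ then ⨆ k, |x k| else (∑ k, |x k| ^ p.toReal) ^ (1 / p.toReal)

/-- Out-neighbours of `i` in the adjacency relation `Adj`. -/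
noncomputable def outN {m : ℕ} (Adj : Fin m → Fin m → Prop) (i : Fin m) : Finset (Fin m) :=
  Finset.univ.filter (fun j => Adj i j)

/-- In-neighbours of `i` in the adjacency relation `Adj`. -/
noncomputable def inN {m : ℕ} (Adj : Fin m → Fin m → Prop) (i : Fin m) : Finset (Fin m) :=
  Finset.univ.filter (fun h => Adj h i)

lemma lpnorm_nonneg {d : ℕ} (p : ℝ≥0∞) (x : Fin d → ℝ) : 0 ≤ lpnorm p x := by
  unfold lpnorm
  split
  · exact Real.iSup_nonneg fun k => abs_nonneg _
  · exact Real.rpow_nonneg (Finset.sum_nonneg fun k _ => Real.rpow_nonneg (abs_nonneg _) _) _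

lemma lpnorm_zero {d : ℕ} (p : ℝ≥0∞) (hp : 1 ≤ p) : lpnorm p (0 : Fin d → ℝ) = 0 := by
  unfold lpnorm
  split
  · simp only [Pi.zero_apply, abs_zero]
    exact le_antisymm (Real.iSup_le (fun _ => le_rfl) le_rfl) (Real.iSup_nonneg fun _ => le_rfl)
  · rename_i h
    have hpr : p.toReal ≠ 0 := by
      have h0 : p ≠ 0 := by positivity
      have := ENNReal.toReal_pos h0 h
      linarith
    simp [Real.zero_rpow hpr, Real.zero_rpow (inv_ne_zero hpr)]

lemma mem_outN {m : ℕ} {Adj : Fin m → Fin m → Prop} {i j : Fin m} :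
    j ∈ outN Adj i ↔ Adj i j := by simp [outN]

lemma mem_inN {m : ℕ} {Adj : Fin m → Fin m → Prop} {i j : Fin m} :
    j ∈ inN Adj i ↔ Adj j i := by simp [inN]

lemma sum01_exists_one {α : Type*} {S : Finset α} {f : α → ℝ}
    (h01 : ∀ a ∈ S, f a = 0 ∨ f a = 1) (h1 : ∑ a ∈ S, f a = 1) :
    ∃ a ∈ S, f a = 1 := by
  by_contra hc
  push_neg at hc
  have : ∑ a ∈ S, f a = 0 := Finset.sum_eq_zero fun a ha => (h01 a ha).resolve_right (hc a ha)
  simp [this] at h1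

lemma sum01_pair_le {α : Type*} {S : Finset α} {f : α → ℝ}
    (h01 : ∀ a ∈ S, f a = 0 ∨ f a = 1) {a b : α} (ha : a ∈ S) (hb : b ∈ S) (hab : a ≠ b)
    (hfa : f a = 1) (hfb : f b = 1) (hle : ∑ x ∈ S, f x ≤ 1) : False := by
  classical
  have hnn : ∀ x ∈ S, 0 ≤ f x := fun x hx => by rcases h01 x hx with h | h <;> simp [h]
  have hsub : ({a, b} : Finset α) ⊆ S := by
    intro x hx; simp only [Finset.mem_insert, Finset.mem_singleton] at hx
    rcases hx with rfl | rfl <;> assumption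
  have : ∑ x ∈ ({a,b} : Finset α), f x ≤ ∑ x ∈ S, f x :=
    Finset.sum_le_sum_of_subset_of_nonneg hsub (fun x hx _ => hnn x hx)
  rw [Finset.sum_pair hab, hfa, hfb] at this
  linarith

lemma sum01_eq_zero_of_ne {α : Type*} {S : Finset α} {f : α → ℝ}
    (h01 : ∀ a ∈ S, f a = 0 ∨ f a = 1) {a b : α} (ha : a ∈ S) (hb : b ∈ S) (hab : b ≠ a)
    (hfa : f a = 1) (hle : ∑ x ∈ S, f x ≤ 1) : f b = 0 := by
  rcases h01 b hb with h | h
  · exact h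
  · exact absurd (sum01_pair_le h01 ha hb (Ne.symm hab) hfa h hle) (by simp)

lemma dir1 {d m : ℕ} (P : Fin m → Set (Fin d → ℝ))
    (ExtF : Fin m → Fin m → Finset (Fin d → ℝ))
    (hFpoly : ∀ i j, i ≠ j → P i ∩ P j = convexHull ℝ (ExtF i j : Set (Fin d → ℝ)))
    (p : Fin m → ℝ≥0∞) (hp : ∀ i, 1 ≤ p i) (ω : Fin m → ℝ)
    (Adj : Fin m → Fin m → Prop) (hAdjne : ∀ i j, Adj i j → i ≠ j)
    (s t : Fin m) (hst : s ≠ t) (xs xt : Fin d → ℝ)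
    (n : ℕ) (γ : Fin (n + 2) → Fin m) (y : Fin (n + 1) → (Fin d → ℝ))
    (hγ0 : γ 0 = s) (hγl : γ (Fin.last (n + 1)) = t) (hγinj : Function.Injective γ)
    (hadj : ∀ l : Fin (n + 1), Adj (γ l.castSucc) (γ l.succ))
    (hy : ∀ l : Fin (n + 1), y l ∈ P (γ l.castSucc) ∩ P (γ l.succ)) :
    ∃ (dv : Fin m → ℝ) (z : Fin m → Fin m → ℝ)
        (lam : Fin m → Fin m → (Fin d → ℝ) → ℝ),
        (∀ i, 0 ≤ dv i) ∧
        (∀ i j, Adj i j → (z i j = 0 ∨ z i j = 1)) ∧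
        (∀ i j, Adj i j → ∀ e ∈ ExtF i j, 0 ≤ lam i j e) ∧
        ((∑ j ∈ outN Adj s, z s j) - (∑ h ∈ inN Adj s, z h s) = 1) ∧
        (∀ i, i ≠ s → i ≠ t →
          (∑ j ∈ outN Adj i, z i j) - (∑ h ∈ inN Adj i, z h i) = 0) ∧
        ((∑ j ∈ outN Adj t, z t j) - (∑ h ∈ inN Adj t, z h t) = -1) ∧
        (∀ i, (∑ h ∈ inN Adj i, z h i) ≤ 1) ∧
        (∀ i, (∑ j ∈ outN Adj i, z i j) ≤ 1) ∧
        (lpnorm (p s) ((∑ j ∈ outN Adj s, ∑ e ∈ ExtF s j, lam s j e • e) - xs) ≤ dv s) ∧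
        (∀ i, i ≠ s → i ≠ t →
          lpnorm (p i) ((∑ j ∈ outN Adj i, ∑ e ∈ ExtF i j, lam i j e • e)
            - (∑ h ∈ inN Adj i, ∑ e ∈ ExtF h i, lam h i e • e)) ≤ dv i) ∧
        (lpnorm (p t) (xt - (∑ h ∈ inN Adj t, ∑ e ∈ ExtF h t, lam h t e • e)) ≤ dv t) ∧
        (∀ i j, Adj i j → (∑ e ∈ ExtF i j, lam i j e) = z i j) ∧
        (ω s * lpnorm (p s) (y 0 - xs)
            + (∑ l : Fin n, ω (γ l.succ.castSucc) *
                lpnorm (p (γ l.succ.castSucc)) (y l.succ - y l.castSucc))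
            + ω t * lpnorm (p t) (xt - y (Fin.last n))) = ∑ i, ω i * dv i := by
  classical
  -- convex weights for each gate point
  have hwex : ∀ l : Fin (n + 1), ∃ w : (Fin d → ℝ) → ℝ,
      (∀ e ∈ ExtF (γ l.castSucc) (γ l.succ), 0 ≤ w e) ∧
      (∑ e ∈ ExtF (γ l.castSucc) (γ l.succ), w e = 1) ∧
      (∑ e ∈ ExtF (γ l.castSucc) (γ l.succ), w e • e = y l) := by
    intro l
    have hne : γ l.castSucc ≠ γ l.succ := hAdjne _ _ (hadj l)
    have hmem : y l ∈ convexHull ℝ (ExtF (γ l.castSucc) (γ l.succ) : Set (Fin d → ℝ)) := by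
      rw [← hFpoly _ _ hne]; exact hy l
    rw [Finset.convexHull_eq] at hmem
    obtain ⟨w, hw0, hw1, hw2⟩ := hmem
    refine ⟨w, hw0, hw1, ?_⟩
    rw [← hw2, Finset.centerMass_eq_of_sum_1 _ _ hw1]
    simp
  choose w hw0 hw1 hw2 using hwex
  -- the arc predicate
  set Parc : Fin m → Fin m → Prop :=
    fun i j => ∃ l : Fin (n + 1), γ l.castSucc = i ∧ γ l.succ = j with hParc
  have hcsinj : Function.Injective (fun l : Fin (n + 1) => γ l.castSucc) :=
    hγinj.comp (Fin.castSucc_injective _)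
  have hsuinj : Function.Injective (fun l : Fin (n + 1) => γ l.succ) :=
    hγinj.comp (Fin.succ_injective _)
  have huniq : ∀ {i j : Fin m} (h : Parc i j) {l : Fin (n + 1)},
      γ l.castSucc = i → h.choose = l := by
    intro i j h l hl
    exact hcsinj (h.choose_spec.1.trans hl.symm)
  have huniq' : ∀ {i j : Fin m} (h : Parc i j) {l : Fin (n + 1)},
      γ l.succ = j → h.choose = l := by
    intro i j h l hl
    exact hsuinj (h.choose_spec.2.trans hl.symm)
  set z : Fin m → Fin m → ℝ := fun i j => if Parc i j then 1 else 0 with hz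
  set lam : Fin m → Fin m → (Fin d → ℝ) → ℝ :=
    fun i j e => if h : Parc i j then w h.choose e else 0 with hlam
  have hlam_arc : ∀ (l : Fin (n + 1)) (e : Fin d → ℝ),
      lam (γ l.castSucc) (γ l.succ) e = w l e := by
    intro l e
    have h : Parc (γ l.castSucc) (γ l.succ) := ⟨l, rfl, rfl⟩
    simp only [hlam, dif_pos h, huniq h rfl]
  have hlam_zero : ∀ i j, ¬ Parc i j → ∀ e, lam i j e = 0 := by
    intro i j h e; simp [hlam, dif_neg h]
  -- the dv variable
  set dv : Fin m → ℝ := fun i =>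
    if i = s then lpnorm (p s) (y 0 - xs)
    else if i = t then lpnorm (p t) (xt - y (Fin.last n))
    else if h : ∃ l : Fin n, γ l.succ.castSucc = i then
      lpnorm (p i) (y h.choose.succ - y h.choose.castSucc)
    else 0 with hdv
  have hmidinj : Function.Injective (fun l : Fin n => γ l.succ.castSucc) :=
    hγinj.comp ((Fin.castSucc_injective _).comp (Fin.succ_injective _))
  have hmuniq : ∀ {i : Fin m} (h : ∃ l : Fin n, γ l.succ.castSucc = i) {l : Fin n},
      γ l.succ.castSucc = i → h.choose = l := by
    intro i h l hl
    exact hmidinj (h.choose_spec.trans hl.symm)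
  -- positions of s and t
  have hs_cs : γ (0 : Fin (n + 1)).castSucc = s := by
    rw [Fin.castSucc_zero, hγ0]
  have ht_su : γ (Fin.last n).succ = t := by
    rw [Fin.succ_last, hγl]
  have hs_not_su : ∀ l : Fin (n + 1), γ l.succ ≠ s := by
    intro l h
    exact Fin.succ_ne_zero l (hγinj (h.trans hγ0.symm))
  have ht_not_cs : ∀ l : Fin (n + 1), γ l.castSucc ≠ t := by
    intro l h
    exact absurd (hγinj (h.trans hγl.symm)) (ne_of_lt (Fin.castSucc_lt_last l))
  have hmid_ne_s : ∀ l : Fin n, γ l.succ.castSucc ≠ s := by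
    intro l h
    have := hγinj (h.trans hγ0.symm)
    exact Fin.succ_ne_zero l (Fin.castSucc_eq_zero_iff.mp this)
  have hmid_ne_t : ∀ l : Fin n, γ l.succ.castSucc ≠ t := fun l => ht_not_cs l.succ
  -- master flow sums
  have hout : ∀ i, (∑ j ∈ outN Adj i, z i j)
      = if ∃ l : Fin (n + 1), γ l.castSucc = i then 1 else 0 := by
    intro i
    split
    · rename_i h
      obtain ⟨l, hl⟩ := h
      have hzz : ∀ j, z i j = if j = γ l.succ then 1 else 0 := by
        intro j
        have hiff : Parc i j ↔ j = γ l.succ := by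
          constructor
          · rintro ⟨l', hl1, hl2⟩
            have : l' = l := hcsinj (hl1.trans hl.symm)
            subst this
            exact hl2.symm
          · rintro rfl
            exact ⟨l, hl, rfl⟩
        simp only [hz, hiff]
      have hmem : γ l.succ ∈ outN Adj i := by
        simp only [outN, Finset.mem_filter, Finset.mem_univ, true_and]
        rw [← hl]; exact hadj l
      rw [Finset.sum_congr rfl (fun j _ => hzz j), Finset.sum_ite_eq', if_pos hmem]
    · rename_i h
      apply Finset.sum_eq_zero
      intro j _
      simp only [hz]
      rw [if_neg]
      intro ⟨l, hl1, hl2⟩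
      exact h ⟨l, hl1⟩
  have hin : ∀ i, (∑ h ∈ inN Adj i, z h i)
      = if ∃ l : Fin (n + 1), γ l.succ = i then 1 else 0 := by
    intro i
    split
    · rename_i h
      obtain ⟨l, hl⟩ := h
      have hzz : ∀ j, z j i = if j = γ l.castSucc then 1 else 0 := by
        intro j
        have hiff : Parc j i ↔ j = γ l.castSucc := by
          constructor
          · rintro ⟨l', hl1, hl2⟩
            have : l' = l := hsuinj (hl2.trans hl.symm)
            subst this
            exact hl1.symm
          · rintro rfl
            exact ⟨l, rfl, hl⟩
        simp only [hz, hiff]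
      have hmem : γ l.castSucc ∈ inN Adj i := by
        simp only [inN, Finset.mem_filter, Finset.mem_univ, true_and]
        rw [← hl]; exact hadj l
      rw [Finset.sum_congr rfl (fun j _ => hzz j), Finset.sum_ite_eq', if_pos hmem]
    · rename_i h
      apply Finset.sum_eq_zero
      intro j _
      simp only [hz]
      rw [if_neg]
      intro ⟨l, hl1, hl2⟩
      exact h ⟨l, hl2⟩
  -- gate sums
  have houtsum : ∀ l : Fin (n + 1),
      (∑ j ∈ outN Adj (γ l.castSucc), ∑ e ∈ ExtF (γ l.castSucc) j,
        lam (γ l.castSucc) j e • e) = y l := by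
    intro l
    rw [Finset.sum_eq_single_of_mem (γ l.succ)]
    · rw [Finset.sum_congr rfl (fun e _ => by rw [hlam_arc l e])]
      exact hw2 l
    · simp only [outN, Finset.mem_filter, Finset.mem_univ, true_and]
      exact hadj l
    · intro b _ hb
      apply Finset.sum_eq_zero
      intro e _
      rw [hlam_zero _ _ (fun ⟨l', hl1, hl2⟩ => hb (by
          have : l' = l := hcsinj hl1
          subst this; exact hl2.symm)) e]
      simp
  have hinsum : ∀ l : Fin (n + 1),
      (∑ h ∈ inN Adj (γ l.succ), ∑ e ∈ ExtF h (γ l.succ),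
        lam h (γ l.succ) e • e) = y l := by
    intro l
    rw [Finset.sum_eq_single_of_mem (γ l.castSucc)]
    · rw [Finset.sum_congr rfl (fun e _ => by rw [hlam_arc l e])]
      exact hw2 l
    · simp only [inN, Finset.mem_filter, Finset.mem_univ, true_and]
      exact hadj l
    · intro b _ hb
      apply Finset.sum_eq_zero
      intro e _
      rw [hlam_zero _ _ (fun ⟨l', hl1, hl2⟩ => hb (by
          have : l' = l := hsuinj hl2
          subst this; exact hl1.symm)) e]
      simp
  -- zero gate sums off path
  have houtsum0 : ∀ i, i ≠ s → (¬ ∃ l : Fin n, γ l.succ.castSucc = i) →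
      (∑ j ∈ outN Adj i, ∑ e ∈ ExtF i j, lam i j e • e) = 0 := by
    intro i his hmid
    apply Finset.sum_eq_zero
    intro j _
    apply Finset.sum_eq_zero
    intro e _
    have hnp : ¬ Parc i j := by
      rintro ⟨l, hl1, hl2⟩
      have hl0 : l ≠ 0 := by
        rintro rfl
        exact his (hs_cs.symm.trans hl1).symm
      obtain ⟨l', rfl⟩ := Fin.exists_succ_eq.mpr hl0
      exact hmid ⟨l', hl1⟩
    rw [hlam_zero i j hnp e]
    simp
  have hinsum0 : ∀ i, i ≠ t → (¬ ∃ l : Fin n, γ l.succ.castSucc = i) →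
      (∑ h ∈ inN Adj i, ∑ e ∈ ExtF h i, lam h i e • e) = 0 := by
    intro i hit hmid
    apply Finset.sum_eq_zero
    intro j _
    apply Finset.sum_eq_zero
    intro e _
    have hnp : ¬ Parc j i := by
      rintro ⟨l, hl1, hl2⟩
      have hll : l ≠ Fin.last n := by
        rintro rfl
        exact hit (ht_su.symm.trans hl2).symm
      obtain ⟨l', rfl⟩ := Fin.exists_castSucc_eq.mpr hll
      exact hmid ⟨l', by rw [← Fin.succ_castSucc]; exact hl2⟩
    rw [hlam_zero j i hnp e]
    simp
  refine ⟨dv, z, lam, ?_, ?_, ?_, ?_, ?_, ?_, ?_, ?_, ?_, ?_, ?_, ?_, ?_⟩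
  · -- dv nonneg
    intro i
    simp only [hdv]
    split
    · exact lpnorm_nonneg _ _
    split
    · exact lpnorm_nonneg _ _
    split
    · exact lpnorm_nonneg _ _
    · exact le_rfl
  · -- z 0/1
    intro i j _
    simp only [hz]
    split
    · right; rfl
    · left; rfl
  · -- lam nonneg
    intro i j _ e he
    simp only [hlam]
    split
    · rename_i h
      obtain ⟨hl1, hl2⟩ := h.choose_spec
      have he' : e ∈ ExtF (γ (Exists.choose h).castSucc) (γ (Exists.choose h).succ) := by
        rw [hl1, hl2]; exact he
      exact hw0 _ e he'
    · exact le_rfl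
  · -- flow at s
    rw [hout, hin, if_pos ⟨0, hs_cs⟩, if_neg]
    · norm_num
    · rintro ⟨l, hl⟩
      exact hs_not_su l hl
  · -- flow at interior
    intro i his hit
    rw [hout, hin]
    have hiff : (∃ l : Fin (n + 1), γ l.castSucc = i) ↔ ∃ l : Fin (n + 1), γ l.succ = i := by
      constructor
      · rintro ⟨l, hl⟩
        have hl0 : l.castSucc ≠ (0 : Fin (n + 2)) := by
          intro h0
          exact his (by rw [← hl, h0, hγ0])
        obtain ⟨q, hq⟩ := Fin.exists_succ_eq.mpr hl0
        exact ⟨q, by rw [hq, hl]⟩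
      · rintro ⟨l, hl⟩
        have hll : l.succ ≠ Fin.last (n + 1) := by
          intro h0
          exact hit (by rw [← hl, h0, hγl])
        obtain ⟨q, hq⟩ := Fin.exists_castSucc_eq.mpr hll
        exact ⟨q, by rw [hq, hl]⟩
    by_cases h : ∃ l : Fin (n + 1), γ l.castSucc = i
    · rw [if_pos h, if_pos (hiff.mp h)]; ring
    · rw [if_neg h, if_neg (fun h' => h (hiff.mpr h'))]; ring
  · -- flow at t
    rw [hout, hin, if_neg, if_pos ⟨Fin.last n, ht_su⟩]
    · norm_num
    · rintro ⟨l, hl⟩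
      exact ht_not_cs l hl
  · -- in ≤ 1
    intro i
    rw [hin]; split <;> norm_num
  · -- out ≤ 1
    intro i
    rw [hout]; split <;> norm_num
  · -- norm at s
    have := houtsum 0
    rw [hs_cs] at this
    rw [this]
    simp only [hdv]
    simp
  · -- norm interior
    intro i his hit
    by_cases h : ∃ l : Fin n, γ l.succ.castSucc = i
    · obtain ⟨l, hl⟩ := h
      have h' : ∃ l : Fin n, γ l.succ.castSucc = i := ⟨l, hl⟩
      have hosum := houtsum l.succ
      have hisum := hinsum l.castSucc
      rw [hl] at hosum
      rw [Fin.succ_castSucc, hl] at hisum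
      rw [hosum, hisum]
      simp only [hdv, if_neg his, if_neg hit, dif_pos h', hmuniq h' hl]
      exact le_rfl
    · rw [houtsum0 i his h, hinsum0 i hit h]
      simp only [hdv, if_neg his, if_neg hit, dif_neg h, sub_zero]
      rw [lpnorm_zero _ (hp i)]
  · -- norm at t
    have := hinsum (Fin.last n)
    rw [ht_su] at this
    rw [this]
    simp only [hdv]
    rw [if_neg (Ne.symm hst)]; simp
  · -- lam sums to z
    intro i j _
    simp only [hz]
    by_cases h : Parc i j
    · rw [if_pos h]
      obtain ⟨hl1, hl2⟩ := h.choose_spec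
      calc ∑ e ∈ ExtF i j, lam i j e
          = ∑ e ∈ ExtF (γ h.choose.castSucc) (γ h.choose.succ), w h.choose e := by
            rw [hl1, hl2]
            exact Finset.sum_congr rfl (fun e _ => by simp only [hlam, dif_pos h])
        _ = 1 := hw1 h.choose
    · rw [if_neg h]
      exact Finset.sum_eq_zero (fun e _ => hlam_zero i j h e)
  · -- objective
    have hSsub : insert s (insert t (Finset.image (fun l : Fin n => γ l.succ.castSucc)
        Finset.univ)) ⊆ Finset.univ := Finset.subset_univ _
    rw [← Finset.sum_subset hSsub]
    · have hs_not : s ∉ insert t (Finset.image (fun l : Fin n => γ l.succ.castSucc)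
          Finset.univ) := by
        simp only [Finset.mem_insert, Finset.mem_image, Finset.mem_univ, true_and]
        push_neg
        exact ⟨hst, fun l => hmid_ne_s l⟩
      have ht_not : t ∉ Finset.image (fun l : Fin n => γ l.succ.castSucc) Finset.univ := by
        simp only [Finset.mem_image, Finset.mem_univ, true_and]
        push_neg
        exact fun l => hmid_ne_t l
      rw [Finset.sum_insert hs_not, Finset.sum_insert ht_not,
          Finset.sum_image (fun x _ y _ h => hmidinj h)]
      have hdvs : dv s = lpnorm (p s) (y 0 - xs) := by
        simp only [hdv]; simp
      have hdvt : dv t = lpnorm (p t) (xt - y (Fin.last n)) := by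
        simp only [hdv]; rw [if_neg (Ne.symm hst)]; simp
      have hdvm : ∀ l : Fin n, dv (γ l.succ.castSucc)
          = lpnorm (p (γ l.succ.castSucc)) (y l.succ - y l.castSucc) := by
        intro l
        have h' : ∃ l' : Fin n, γ l'.succ.castSucc = γ l.succ.castSucc := ⟨l, rfl⟩
        simp only [hdv, if_neg (hmid_ne_s l), if_neg (hmid_ne_t l), dif_pos h',
          hmuniq h' rfl]
      have hsum : ∑ l : Fin n, ω (γ l.succ.castSucc) * dv (γ l.succ.castSucc)
          = ∑ l : Fin n, ω (γ l.succ.castSucc) *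
              lpnorm (p (γ l.succ.castSucc)) (y l.succ - y l.castSucc) :=
        Finset.sum_congr rfl (fun l _ => by rw [hdvm l])
      rw [hdvs, hdvt, hsum]
      ring
    · intro i _ hi
      simp only [Finset.mem_insert, Finset.mem_image, Finset.mem_univ, true_and] at hi
      push_neg at hi
      obtain ⟨his, hit, hmid⟩ := hi
      have : dv i = 0 := by
        simp only [hdv, if_neg his, if_neg hit]
        rw [dif_neg (not_exists.mpr hmid)]
      rw [this, mul_zero]

lemma dir2 {d m : ℕ} (P : Fin m → Set (Fin d → ℝ))
    (ExtF : Fin m → Fin m → Finset (Fin d → ℝ))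
    (hFpoly : ∀ i j, i ≠ j → P i ∩ P j = convexHull ℝ (ExtF i j : Set (Fin d → ℝ)))
    (p : Fin m → ℝ≥0∞) (ω : Fin m → ℝ) (hω : ∀ i, 0 < ω i)
    (Adj : Fin m → Fin m → Prop) (hAdjne : ∀ i j, Adj i j → i ≠ j)
    (s t : Fin m) (hst : s ≠ t) (xs xt : Fin d → ℝ)
    (dv : Fin m → ℝ) (z : Fin m → Fin m → ℝ) (lam : Fin m → Fin m → (Fin d → ℝ) → ℝ)
    (hdvnn : ∀ i, 0 ≤ dv i)
    (hz01 : ∀ i j, Adj i j → (z i j = 0 ∨ z i j = 1))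
    (hlamnn : ∀ i j, Adj i j → ∀ e ∈ ExtF i j, 0 ≤ lam i j e)
    (hflows : (∑ j ∈ outN Adj s, z s j) - (∑ h ∈ inN Adj s, z h s) = 1)
    (hflow0 : ∀ i, i ≠ s → i ≠ t →
      (∑ j ∈ outN Adj i, z i j) - (∑ h ∈ inN Adj i, z h i) = 0)
    (hflowt : (∑ j ∈ outN Adj t, z t j) - (∑ h ∈ inN Adj t, z h t) = -1)
    (hinle : ∀ i, (∑ h ∈ inN Adj i, z h i) ≤ 1)
    (houtle : ∀ i, (∑ j ∈ outN Adj i, z i j) ≤ 1)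
    (hnorms : lpnorm (p s) ((∑ j ∈ outN Adj s, ∑ e ∈ ExtF s j, lam s j e • e) - xs) ≤ dv s)
    (hnormm : ∀ i, i ≠ s → i ≠ t →
      lpnorm (p i) ((∑ j ∈ outN Adj i, ∑ e ∈ ExtF i j, lam i j e • e)
        - (∑ h ∈ inN Adj i, ∑ e ∈ ExtF h i, lam h i e • e)) ≤ dv i)
    (hnormt : lpnorm (p t) (xt - (∑ h ∈ inN Adj t, ∑ e ∈ ExtF h t, lam h t e • e)) ≤ dv t)
    (hlamz : ∀ i j, Adj i j → (∑ e ∈ ExtF i j, lam i j e) = z i j) :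
    ∃ (n : ℕ) (γ : Fin (n + 2) → Fin m) (y : Fin (n + 1) → (Fin d → ℝ)),
      γ 0 = s ∧ γ (Fin.last (n + 1)) = t ∧ Function.Injective γ ∧
      (∀ l : Fin (n + 1), Adj (γ l.castSucc) (γ l.succ)) ∧
      (∀ l : Fin (n + 1), y l ∈ P (γ l.castSucc) ∩ P (γ l.succ)) ∧
      (ω s * lpnorm (p s) (y 0 - xs)
          + (∑ l : Fin n, ω (γ l.succ.castSucc) *
              lpnorm (p (γ l.succ.castSucc)) (y l.succ - y l.castSucc))
          + ω t * lpnorm (p t) (xt - y (Fin.last n))) ≤ ∑ i, ω i * dv i := by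
  classical
  -- basic sign facts
  have hout01 : ∀ i, ∀ j ∈ outN Adj i, z i j = 0 ∨ z i j = 1 :=
    fun i j hj => hz01 i j (mem_outN.mp hj)
  have hin01 : ∀ i, ∀ h ∈ inN Adj i, z h i = 0 ∨ z h i = 1 :=
    fun i h hh => hz01 h i (mem_inN.mp hh)
  have hout_nn : ∀ i, ∀ j ∈ outN Adj i, 0 ≤ z i j := by
    intro i j hj; rcases hout01 i j hj with h | h <;> simp [h]
  have hin_nn : ∀ i, ∀ h ∈ inN Adj i, 0 ≤ z h i := by
    intro i h hh; rcases hin01 i h hh with h' | h' <;> simp [h']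
  have hinS_nn : ∀ i, 0 ≤ ∑ h ∈ inN Adj i, z h i :=
    fun i => Finset.sum_nonneg (hin_nn i)
  have houtS_nn : ∀ i, 0 ≤ ∑ j ∈ outN Adj i, z i j :=
    fun i => Finset.sum_nonneg (hout_nn i)
  have houts1 : (∑ j ∈ outN Adj s, z s j) = 1 := by
    have := hinS_nn s; have := houtle s; linarith
  have hins0 : (∑ h ∈ inN Adj s, z h s) = 0 := by
    have := houtle s; have := hinS_nn s; linarith
  -- the successor map
  set nxt : Fin m → Fin m := fun i =>
    if h : ∃ j, j ∈ outN Adj i ∧ z i j = 1 then h.choose else i with hnxt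
  have nxt_spec : ∀ i, (∑ j ∈ outN Adj i, z i j) = 1 →
      nxt i ∈ outN Adj i ∧ z i (nxt i) = 1 := by
    intro i hi
    obtain ⟨j, hj, hzj⟩ := sum01_exists_one (hout01 i) hi
    have hex : ∃ j, j ∈ outN Adj i ∧ z i j = 1 := ⟨j, hj, hzj⟩
    simp only [hnxt, dif_pos hex]
    exact hex.choose_spec
  -- iterate
  set u : ℕ → Fin m := fun k => Nat.rec s (fun _ v => nxt v) k with hu
  have hu0 : u 0 = s := rfl
  have husucc : ∀ k, u (k + 1) = nxt (u k) := fun k => rfl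
  -- the key invariant
  have key : ∀ k : ℕ, (∀ a, a ≤ k → u a ≠ t) →
      (∀ a, a ≤ k → z (u a) (u (a + 1)) = 1 ∧ u (a + 1) ∈ outN Adj (u a)) ∧
      (∀ a, 1 ≤ a → a ≤ k + 1 → u a ≠ s) ∧
      (∀ a b, a ≤ k + 1 → b ≤ k + 1 → u a = u b → a = b) := by
    intro k
    induction k with
    | zero =>
      intro _
      have h0 := nxt_spec s houts1
      have harc0 : z (u 0) (u 1) = 1 ∧ u 1 ∈ outN Adj (u 0) := ⟨h0.2, h0.1⟩
      have hu1s : u 1 ≠ s := by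
        intro h
        have := mem_outN.mp harc0.2
        rw [hu0, h] at this
        exact hAdjne s s this rfl
      refine ⟨?_, ?_, ?_⟩
      · intro a ha
        interval_cases a
        exact harc0
      · intro a h1 h2
        interval_cases a
        exact hu1s
      · intro a b ha hb hab
        interval_cases a <;> interval_cases b <;> first
          | rfl
          | (exfalso; rw [hu0] at hab; exact hu1s hab.symm)
          | (exfalso; rw [hu0] at hab; exact hu1s hab)
    | succ k ih =>
      intro hT
      obtain ⟨harc, hns, hinj⟩ := ih (fun a ha => hT a (Nat.le_succ_of_le ha))
      have hvt : u (k + 1) ≠ t := hT (k + 1) le_rfl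
      have hvs : u (k + 1) ≠ s := hns (k + 1) (by omega) (by omega)
      have hinv_ge : (1 : ℝ) ≤ ∑ h ∈ inN Adj (u (k + 1)), z h (u (k + 1)) := by
        have harck := harc k le_rfl
        have hmem : u k ∈ inN Adj (u (k + 1)) := mem_inN.mpr (mem_outN.mp harck.2)
        calc (1 : ℝ) = z (u k) (u (k + 1)) := harck.1.symm
          _ ≤ _ := Finset.single_le_sum (hin_nn (u (k + 1))) hmem
      have houtv : (∑ j ∈ outN Adj (u (k + 1)), z (u (k + 1)) j) = 1 := by
        have := hflow0 (u (k + 1)) hvs hvt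
        have := hinle (u (k + 1))
        linarith
      have harcnew := nxt_spec (u (k + 1)) houtv
      have harcnew' : z (u (k + 1)) (u (k + 2)) = 1 ∧ u (k + 2) ∈ outN Adj (u (k + 1)) :=
        ⟨harcnew.2, harcnew.1⟩
      have hnews : u (k + 2) ≠ s := by
        intro h
        have hmem : u (k + 1) ∈ inN Adj s := by
          rw [← h]; exact mem_inN.mpr (mem_outN.mp harcnew'.2)
        have h1 : (1 : ℝ) ≤ ∑ h' ∈ inN Adj s, z h' s := by
          calc (1 : ℝ) = z (u (k + 1)) s := by rw [← h]; exact harcnew'.1.symm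
            _ ≤ _ := Finset.single_le_sum (hin_nn s) hmem
        linarith [hins0]
      have hnotprev : ∀ b, b ≤ k + 1 → u (k + 2) ≠ u b := by
        intro b hb hab
        rcases Nat.eq_zero_or_pos b with rfl | hb1
        · rw [hu0] at hab; exact hnews hab
        · have hwns : u b ≠ s := hns b hb1 hb
          have hwnt : u b ≠ t := hT b hb
          have hb' : b - 1 + 1 = b := by omega
          have harcb := harc (b - 1) (by omega)
          rw [hb'] at harcb
          have hmem1 : u (b - 1) ∈ inN Adj (u b) := mem_inN.mpr (mem_outN.mp harcb.2)
          have hmem2 : u (k + 1) ∈ inN Adj (u b) := by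
            rw [← hab]; exact mem_inN.mpr (mem_outN.mp harcnew'.2)
          have hne : u (b - 1) ≠ u (k + 1) := by
            intro h
            have := hinj (b - 1) (k + 1) (by omega) le_rfl h
            omega
          exact sum01_pair_le (hin01 (u b)) hmem1 hmem2 hne harcb.1
            (by rw [← hab]; exact harcnew'.1) (hinle (u b))
      refine ⟨?_, ?_, ?_⟩
      · intro a ha
        rcases Nat.lt_or_ge a (k + 1) with h | h
        · exact harc a (by omega)
        · have : a = k + 1 := by omega
          subst this
          exact harcnew'
      · intro a h1 h2
        rcases Nat.lt_or_ge a (k + 2) with h | h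
        · exact hns a h1 (by omega)
        · have : a = k + 2 := by omega
          subst this
          exact hnews
      · intro a b ha hb hab
        rcases Nat.lt_or_ge a (k + 2) with h | h <;> rcases Nat.lt_or_ge b (k + 2) with h' | h'
        · exact hinj a b (by omega) (by omega) hab
        · have : b = k + 2 := by omega
          subst this
          exact absurd hab.symm (hnotprev a (by omega))
        · have : a = k + 2 := by omega
          subst this
          exact absurd hab (hnotprev b (by omega))
        · omega
  -- t is reached
  have hreach : ∃ k, u k = t := by
    by_contra hc
    push_neg at hc
    obtain ⟨_, _, hinj⟩ := key m (fun a _ => hc a)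
    have : (Finset.range (m + 1)).card ≤ (Finset.univ : Finset (Fin m)).card :=
      Finset.card_le_card_of_injOn u (fun a _ => Finset.mem_univ _)
        (fun a ha b hb hab => hinj a b
          (by simp only [Finset.coe_range, Set.mem_Iio] at ha; omega)
          (by simp only [Finset.coe_range, Set.mem_Iio] at hb; omega) hab)
    simp at this
  have huN0 : u (Nat.find hreach) = t := Nat.find_spec hreach
  have hNpos : 0 < Nat.find hreach := by
    rcases Nat.eq_zero_or_pos (Nat.find hreach) with h | h
    · rw [h, hu0] at huN0; exact absurd huN0 hst
    · exact h
  obtain ⟨n, hn⟩ : ∃ n, Nat.find hreach = n + 1 := ⟨Nat.find hreach - 1, by omega⟩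
  have huN : u (n + 1) = t := by rw [← hn]; exact huN0
  have hNmin : ∀ a, a < n + 1 → u a ≠ t := fun a ha =>
    Nat.find_min hreach (by omega)
  obtain ⟨harc, hns, hinj⟩ := key n (fun a ha => hNmin a (by omega))
  -- the path
  refine ⟨n, fun k => u k.val, fun l => ∑ e ∈ ExtF (u l.val) (u (l.val + 1)),
    lam (u l.val) (u (l.val + 1)) e • e, ?_, ?_, ?_, ?_, ?_, ?_⟩
  · exact hu0
  · exact huN
  · intro a b hab
    exact Fin.ext (hinj a.val b.val (by omega) (by omega) hab)
  · intro l
    exact mem_outN.mp (harc l.val (by omega)).2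
  · intro l
    have harcl := harc l.val (by omega)
    have hadjl : Adj (u l.val) (u (l.val + 1)) := mem_outN.mp harcl.2
    have hne := hAdjne _ _ hadjl
    show _ ∈ P (u l.val) ∩ P (u (l.val + 1))
    rw [hFpoly _ _ hne]
    have hsum1 : ∑ e ∈ ExtF (u l.val) (u (l.val + 1)), lam (u l.val) (u (l.val + 1)) e = 1 := by
      rw [hlamz _ _ hadjl]; exact harcl.1
    have hmm := Finset.centerMass_mem_convexHull (ExtF (u l.val) (u (l.val + 1)))
      (fun e he => hlamnn _ _ hadjl e he) (by rw [hsum1]; norm_num)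
      (fun e he => (Finset.mem_coe.mpr he : (id e : Fin d → ℝ) ∈ _))
    rwa [Finset.centerMass_eq_of_sum_1 _ id hsum1, Finset.sum_congr rfl
      (fun e _ => rfl)] at hmm
  · -- cost bound
    have inner_zero : ∀ i j, Adj i j → z i j = 0 →
        (∑ e ∈ ExtF i j, lam i j e • e) = 0 := by
      intro i j hadj hz0
      have hs0 : ∑ e ∈ ExtF i j, lam i j e = 0 := by
        rw [hlamz _ _ hadj]; exact hz0
      have hall := (Finset.sum_eq_zero_iff_of_nonneg (hlamnn i j hadj)).mp hs0
      exact Finset.sum_eq_zero fun e he => by rw [hall e he, zero_smul]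
    have gout : ∀ a, a ≤ n →
        (∑ j ∈ outN Adj (u a), ∑ e ∈ ExtF (u a) j, lam (u a) j e • e)
          = ∑ e ∈ ExtF (u a) (u (a + 1)), lam (u a) (u (a + 1)) e • e := by
      intro a ha
      obtain ⟨hz1, hmem⟩ := harc a ha
      apply Finset.sum_eq_single_of_mem _ hmem
      intro b hb hbne
      exact inner_zero (u a) b (mem_outN.mp hb)
        (sum01_eq_zero_of_ne (hout01 (u a)) hmem hb hbne hz1 (houtle (u a)))
    have gin : ∀ a, a ≤ n →
        (∑ h ∈ inN Adj (u (a + 1)), ∑ e ∈ ExtF h (u (a + 1)), lam h (u (a + 1)) e • e)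
          = ∑ e ∈ ExtF (u a) (u (a + 1)), lam (u a) (u (a + 1)) e • e := by
      intro a ha
      obtain ⟨hz1, hmem⟩ := harc a ha
      have hmem' : u a ∈ inN Adj (u (a + 1)) := mem_inN.mpr (mem_outN.mp hmem)
      apply Finset.sum_eq_single_of_mem _ hmem'
      intro b hb hbne
      exact inner_zero b (u (a + 1)) (mem_inN.mp hb)
        (sum01_eq_zero_of_ne (hin01 (u (a + 1))) hmem' hb hbne hz1 (hinle (u (a + 1))))
    rw [← huN, ← hu0]
    rw [← hu0] at hnorms
    rw [← huN] at hnormt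
    rw [gout 0 (Nat.zero_le n)] at hnorms
    rw [gin n le_rfl] at hnormt
    have hbs : ω (u 0) * lpnorm (p (u 0))
        ((∑ e ∈ ExtF (u 0) (u 1), lam (u 0) (u 1) e • e) - xs) ≤ ω (u 0) * dv (u 0) :=
      mul_le_mul_of_nonneg_left hnorms (hω (u 0)).le
    have hbt : ω (u (n + 1)) * lpnorm (p (u (n + 1)))
        (xt - (∑ e ∈ ExtF (u n) (u (n + 1)), lam (u n) (u (n + 1)) e • e))
          ≤ ω (u (n + 1)) * dv (u (n + 1)) :=
      mul_le_mul_of_nonneg_left hnormt (hω (u (n + 1))).le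
    have hbm : ∀ l : Fin n, ω (u (l.val + 1)) * lpnorm (p (u (l.val + 1)))
        ((∑ e ∈ ExtF (u (l.val + 1)) (u (l.val + 2)), lam (u (l.val + 1)) (u (l.val + 2)) e • e)
          - (∑ e ∈ ExtF (u l.val) (u (l.val + 1)), lam (u l.val) (u (l.val + 1)) e • e))
        ≤ ω (u (l.val + 1)) * dv (u (l.val + 1)) := by
      intro l
      have his : u (l.val + 1) ≠ s := hns (l.val + 1) (by omega) (by omega)
      have hit : u (l.val + 1) ≠ t := hNmin (l.val + 1) (by omega)
      have h := hnormm (u (l.val + 1)) his hit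
      rw [gout (l.val + 1) (by omega), gin l.val (by omega)] at h
      exact mul_le_mul_of_nonneg_left h (hω (u (l.val + 1))).le
    -- assemble
    have hstep1 : ω (u 0) * lpnorm (p (u 0))
          ((∑ e ∈ ExtF (u 0) (u 1), lam (u 0) (u 1) e • e) - xs)
        + (∑ l : Fin n, ω (u (l.val + 1)) * lpnorm (p (u (l.val + 1)))
            ((∑ e ∈ ExtF (u (l.val + 1)) (u (l.val + 2)),
                lam (u (l.val + 1)) (u (l.val + 2)) e • e)
              - (∑ e ∈ ExtF (u l.val) (u (l.val + 1)), lam (u l.val) (u (l.val + 1)) e • e)))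
        + ω (u (n + 1)) * lpnorm (p (u (n + 1)))
            (xt - (∑ e ∈ ExtF (u n) (u (n + 1)), lam (u n) (u (n + 1)) e • e))
        ≤ ω (u 0) * dv (u 0) + (∑ l : Fin n, ω (u (l.val + 1)) * dv (u (l.val + 1)))
          + ω (u (n + 1)) * dv (u (n + 1)) :=
      add_le_add (add_le_add hbs (Finset.sum_le_sum fun l _ => hbm l)) hbt
    have hnot2 : u (n + 1) ∉ Finset.image (fun l : Fin n => u (l.val + 1)) Finset.univ := by
      simp only [Finset.mem_image, Finset.mem_univ, true_and, not_exists]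
      intro l hl
      have := hinj (l.val + 1) (n + 1) (by omega) le_rfl hl
      omega
    have hnot1 : u 0 ∉ insert (u (n + 1))
        (Finset.image (fun l : Fin n => u (l.val + 1)) Finset.univ) := by
      simp only [Finset.mem_insert, Finset.mem_image, Finset.mem_univ, true_and, not_or,
        not_exists]
      constructor
      · intro h
        have := hinj 0 (n + 1) (by omega) le_rfl h
        omega
      · intro l hl
        have := hinj (l.val + 1) 0 (by omega) (by omega) hl
        omega
    have hSsum : ∑ i ∈ insert (u 0) (insert (u (n + 1))
          (Finset.image (fun l : Fin n => u (l.val + 1)) Finset.univ)), ω i * dv i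
        = ω (u 0) * dv (u 0) + (∑ l : Fin n, ω (u (l.val + 1)) * dv (u (l.val + 1)))
          + ω (u (n + 1)) * dv (u (n + 1)) := by
      rw [Finset.sum_insert hnot1, Finset.sum_insert hnot2,
        Finset.sum_image (fun a _ b _ hab => by
          have := hinj (a.val + 1) (b.val + 1) (by omega) (by omega) hab
          exact Fin.ext (by omega))]
      ring
    have hstep2 : ∑ i ∈ insert (u 0) (insert (u (n + 1))
          (Finset.image (fun l : Fin n => u (l.val + 1)) Finset.univ)), ω i * dv i
        ≤ ∑ i, ω i * dv i :=
      Finset.sum_le_sum_of_subset_of_nonneg (Finset.subset_univ _)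
        (fun i _ _ => mul_nonneg (hω i).le (hdvnn i))
    calc ω (u 0) * lpnorm (p (u 0))
          ((∑ e ∈ ExtF (u ((0 : Fin (n + 1)).val)) (u ((0 : Fin (n + 1)).val + 1)),
              lam (u ((0 : Fin (n + 1)).val)) (u ((0 : Fin (n + 1)).val + 1)) e • e) - xs)
        + (∑ l : Fin n, ω (u (l.succ.castSucc.val)) * lpnorm (p (u (l.succ.castSucc.val)))
            ((∑ e ∈ ExtF (u (l.succ.val)) (u (l.succ.val + 1)),
                lam (u (l.succ.val)) (u (l.succ.val + 1)) e • e)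
              - (∑ e ∈ ExtF (u (l.castSucc.val)) (u (l.castSucc.val + 1)),
                  lam (u (l.castSucc.val)) (u (l.castSucc.val + 1)) e • e)))
        + ω (u (n + 1)) * lpnorm (p (u (n + 1)))
            (xt - (∑ e ∈ ExtF (u ((Fin.last n).val)) (u ((Fin.last n).val + 1)),
              lam (u ((Fin.last n).val)) (u ((Fin.last n).val + 1)) e • e))
        ≤ ω (u 0) * dv (u 0) + (∑ l : Fin n, ω (u (l.val + 1)) * dv (u (l.val + 1)))
          + ω (u (n + 1)) * dv (u (n + 1)) := hstep1
      _ = _ := hSsum.symm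
      _ ≤ ∑ i, ω i * dv i := hstep2

lemma sInf_eq_of_between {A B : Set ℝ} (h1 : A ⊆ B)
    (h2 : ∀ r ∈ B, ∃ r' ∈ A, r' ≤ r)
    (hA0 : ∀ r ∈ A, 0 ≤ r) (hB0 : ∀ r ∈ B, 0 ≤ r) : sInf A = sInf B := by
  by_cases hA : A.Nonempty
  · have hB : B.Nonempty := ⟨hA.choose, h1 hA.choose_spec⟩
    refine le_antisymm (le_csInf hB ?_) (csInf_le_csInf ⟨0, fun x hx => hB0 x hx⟩ hA h1)
    intro b hb
    obtain ⟨r', hr', hle⟩ := h2 b hb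
    exact (csInf_le ⟨0, fun x hx => hA0 x hx⟩ hr').trans hle
  · have hB : ¬ B.Nonempty := by
      rintro ⟨r, hr⟩
      obtain ⟨r', hr', -⟩ := h2 r hr
      exact hA ⟨r', hr'⟩
    rw [Set.not_nonempty_iff_eq_empty] at hA hB
    rw [hA, hB]

/-- Equivalence of Problem (SPP) and formulation (SPP-F1): the geodesic distance
`D(x_s,x_t)` (infimum over simple paths and gate points) equals the optimal value of
the mixed-integer program (SPP-F1). -/
theorem stmt_10 {d m : ℕ}
    (P : Fin m → Set (Fin d → ℝ))
    (Ext : Fin m → Finset (Fin d → ℝ))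
    (hExt : ∀ i, (Ext i : Set (Fin d → ℝ)) = Set.extremePoints ℝ (P i))
    (hP : ∀ i, P i = convexHull ℝ (Ext i : Set (Fin d → ℝ)))
    (hdisj : ∀ i j, i ≠ j → interior (P i) ∩ interior (P j) = ∅)
    (p : Fin m → ℝ≥0∞) (hp : ∀ i, 1 ≤ p i)
    (ω : Fin m → ℝ) (hω : ∀ i, 0 < ω i)
    (ExtF : Fin m → Fin m → Finset (Fin d → ℝ))
    (hExtF : ∀ i j, i ≠ j → (ExtF i j : Set (Fin d → ℝ)) = Set.extremePoints ℝ (P i ∩ P j))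
    (hFpoly : ∀ i j, i ≠ j → P i ∩ P j = convexHull ℝ (ExtF i j : Set (Fin d → ℝ)))
    (Adj : Fin m → Fin m → Prop)
    (hAdj : ∀ i j, Adj i j ↔ i ≠ j ∧ (P i ∩ P j).Nonempty)
    (s t : Fin m) (hst : s ≠ t)
    (xs xt : Fin d → ℝ) (hxs : xs ∈ P s) (hxt : xt ∈ P t) :
    sInf {r : ℝ | ∃ (n : ℕ) (γ : Fin (n + 2) → Fin m) (y : Fin (n + 1) → (Fin d → ℝ)),
        γ 0 = s ∧ γ (Fin.last (n + 1)) = t ∧ Function.Injective γ ∧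
        (∀ l : Fin (n + 1), Adj (γ l.castSucc) (γ l.succ)) ∧
        (∀ l : Fin (n + 1), y l ∈ P (γ l.castSucc) ∩ P (γ l.succ)) ∧
        r = ω s * lpnorm (p s) (y 0 - xs)
            + (∑ l : Fin n, ω (γ l.succ.castSucc) *
                lpnorm (p (γ l.succ.castSucc)) (y l.succ - y l.castSucc))
            + ω t * lpnorm (p t) (xt - y (Fin.last n))}
    = sInf {r : ℝ | ∃ (dv : Fin m → ℝ) (z : Fin m → Fin m → ℝ)
        (lam : Fin m → Fin m → (Fin d → ℝ) → ℝ),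
        (∀ i, 0 ≤ dv i) ∧
        (∀ i j, Adj i j → (z i j = 0 ∨ z i j = 1)) ∧
        (∀ i j, Adj i j → ∀ e ∈ ExtF i j, 0 ≤ lam i j e) ∧
        ((∑ j ∈ outN Adj s, z s j) - (∑ h ∈ inN Adj s, z h s) = 1) ∧
        (∀ i, i ≠ s → i ≠ t →
          (∑ j ∈ outN Adj i, z i j) - (∑ h ∈ inN Adj i, z h i) = 0) ∧
        ((∑ j ∈ outN Adj t, z t j) - (∑ h ∈ inN Adj t, z h t) = -1) ∧
        (∀ i, (∑ h ∈ inN Adj i, z h i) ≤ 1) ∧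
        (∀ i, (∑ j ∈ outN Adj i, z i j) ≤ 1) ∧
        (lpnorm (p s) ((∑ j ∈ outN Adj s, ∑ e ∈ ExtF s j, lam s j e • e) - xs) ≤ dv s) ∧
        (∀ i, i ≠ s → i ≠ t →
          lpnorm (p i) ((∑ j ∈ outN Adj i, ∑ e ∈ ExtF i j, lam i j e • e)
            - (∑ h ∈ inN Adj i, ∑ e ∈ ExtF h i, lam h i e • e)) ≤ dv i) ∧
        (lpnorm (p t) (xt - (∑ h ∈ inN Adj t, ∑ e ∈ ExtF h t, lam h t e • e)) ≤ dv t) ∧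
        (∀ i j, Adj i j → (∑ e ∈ ExtF i j, lam i j e) = z i j) ∧
        r = ∑ i, ω i * dv i} := by
  have hAdjne : ∀ i j, Adj i j → i ≠ j := fun i j h => ((hAdj i j).mp h).1
  apply sInf_eq_of_between
  · rintro r ⟨n, γ, y, h1, h2, h3, h4, h5, h6⟩
    obtain ⟨dv, z, lam, c1, c2, c3, c4, c5, c6, c7, c8, c9, c10, c11, c12, hobj⟩ :=
      dir1 P ExtF hFpoly p hp ω Adj hAdjne s t hst xs xt n γ y h1 h2 h3 h4 h5
    exact ⟨dv, z, lam, c1, c2, c3, c4, c5, c6, c7, c8, c9, c10, c11, c12, h6.trans hobj⟩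
  · rintro r ⟨dv, z, lam, c1, c2, c3, c4, c5, c6, c7, c8, c9, c10, c11, c12, hr⟩
    obtain ⟨n, γ, y, h1, h2, h3, h4, h5, hcost⟩ :=
      dir2 P ExtF hFpoly p ω hω Adj hAdjne s t hst xs xt dv z lam
        c1 c2 c3 c4 c5 c6 c7 c8 c9 c10 c11 c12
    exact ⟨_, ⟨n, γ, y, h1, h2, h3, h4, h5, rfl⟩, by rw [hr]; exact hcost⟩
  · rintro r ⟨n, γ, y, -, -, -, -, -, h6⟩
    rw [h6]
    have hnn : ∀ i (x : Fin d → ℝ), 0 ≤ ω i * lpnorm (p i) x :=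
      fun i x => mul_nonneg (hω i).le (lpnorm_nonneg _ _)
    exact add_nonneg (add_nonneg (hnn _ _) (Finset.sum_nonneg fun l _ => hnn _ _)) (hnn _ _)
  · rintro r ⟨dv, z, lam, c1, -, -, -, -, -, -, -, -, -, -, -, hr⟩
    rw [hr]
    exact Finset.sum_nonneg fun i _ => mul_nonneg (hω i).le (c1 i)
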